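/- Let I = [a, a + 2^(−N)] ⊆ [0,1] and let g : [0,1] → ℝ be zero outside I, equal to (3/2)·2^(−N) at the midpoint of I, and linear on each half of I. Then g is continuous, 0 ≤ g(x) ≤ (3/2)·2^(−N) for all x, and every modulus of continuity μ of g satisfies μ(N) > N. -/

import Mathlib

/-! The tent rises by `(3/2)·2^(-N)` over the half-width `2^(-N-1)` between the left endpoint
and the midpoint of `I`. A modulus with `μ N ≤ N` would allow these two points, which are at
distance at most `2^(-N)`, yet their values differ by more than `2^(-N)`. -/

noncomputable def tent (h c r x : ℝ) : ℝ := h * max (1 - |x - c| / r) 0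

section Tent

variable {h c r : ℝ}

theorem continuous_tent (h c r : ℝ) : Continuous (tent h c r) := by
  unfold tent; fun_prop

theorem tent_nonneg (hh : 0 ≤ h) (x : ℝ) : 0 ≤ tent h c r x := by
  unfold tent; positivity

theorem tent_le (hh : 0 ≤ h) (hr : 0 ≤ r) (x : ℝ) : tent h c r x ≤ h := by
  have hmax : max (1 - |x - c| / r) 0 ≤ 1 :=
    max_le (sub_le_self _ (by positivity)) zero_le_one
  simpa [tent] using mul_le_of_le_one_right hh hmax

@[simp]
theorem tent_self (h c r : ℝ) : tent h c r c = h := by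
  simp [tent]

theorem tent_sub_self (h c : ℝ) (hr : 0 < r) : tent h c r (c - r) = 0 := by
  simp [tent, abs_of_pos hr, hr.ne']

end Tent

def IsModulusOn (g : ℝ → ℝ) (s : Set ℝ) (μ : ℕ → ℕ) : Prop :=
  ∀ x ∈ s, ∀ y ∈ s, ∀ n : ℕ, |x - y| ≤ (2:ℝ)^(-(μ n : ℤ)) → |g x - g y| ≤ (2:ℝ)^(-(n:ℤ))

theorem IsModulusOn.lt_of_gap {g : ℝ → ℝ} {s : Set ℝ} {μ : ℕ → ℕ} (hμ : IsModulusOn g s μ)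
    {x y : ℝ} (hx : x ∈ s) (hy : y ∈ s) {n : ℕ} (hxy : |x - y| ≤ (2:ℝ)^(-(n:ℤ)))
    (hgap : (2:ℝ)^(-(n:ℤ)) < |g x - g y|) : n < μ n := by
  by_contra! hle
  have hpow : (2:ℝ)^(-(n:ℤ)) ≤ (2:ℝ)^(-(μ n : ℤ)) :=
    zpow_le_zpow_right₀ one_le_two (by omega)
  exact hgap.not_ge (hμ x hx y hy n (hxy.trans hpow))

theorem stmt_19 (N : ℕ) (a : ℝ) (ha : 0 ≤ a) (ha' : a + (2:ℝ)^(-(N:ℤ)) ≤ 1)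
    (g : ℝ → ℝ)
    (hg : ∀ x, g x = (3/2) * (2:ℝ)^(-(N:ℤ)) *
      max (1 - |x - (a + (2:ℝ)^(-(N:ℤ)-1))| / (2:ℝ)^(-(N:ℤ)-1)) 0) :
    Continuous g ∧
    (∀ x, 0 ≤ g x ∧ g x ≤ (3/2) * (2:ℝ)^(-(N:ℤ))) ∧
    ∀ μ : ℕ → ℕ,
      (∀ x ∈ Set.Icc (0:ℝ) 1, ∀ y ∈ Set.Icc (0:ℝ) 1, ∀ n : ℕ,
        |x - y| ≤ (2:ℝ)^(-(μ n : ℤ)) → |g x - g y| ≤ (2:ℝ)^(-(n:ℤ))) →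
      μ N > N := by
  have hwidth : (2:ℝ)^(-(N:ℤ)) = 2 * (2:ℝ)^(-(N:ℤ)-1) := by
    rw [zpow_sub₀ two_ne_zero, zpow_one]; ring
  set r : ℝ := (2:ℝ)^(-(N:ℤ)-1)
  have hr : 0 < r := by positivity
  have hg_eq : g = tent ((3/2) * (2:ℝ)^(-(N:ℤ))) (a + r) r := funext hg
  subst hg_eq
  refine ⟨continuous_tent _ _ _, fun x ↦ ⟨tent_nonneg (by positivity) x,
    tent_le (by positivity) hr.le x⟩, fun μ hμ ↦ ?_⟩
  have hmid : a + r ∈ Set.Icc (0:ℝ) 1 := ⟨by positivity, by linarith⟩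
  have hleft : a ∈ Set.Icc (0:ℝ) 1 := ⟨ha, by linarith⟩
  refine IsModulusOn.lt_of_gap hμ hmid hleft ?_ ?_
  · rw [add_sub_cancel_left, abs_of_pos hr]; linarith
  · have hg_left : tent ((3/2) * (2:ℝ)^(-(N:ℤ))) (a + r) r a = 0 := by
      simpa using tent_sub_self ((3/2) * (2:ℝ)^(-(N:ℤ))) (a + r) hr
    rw [hg_left, tent_self, sub_zero, abs_of_pos (by positivity)]
    linarith
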